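/- arXiv:1904.04444 — 2 statements merged into one kernel-verified Lean document; each statement's English description precedes it below -/
import Mathlib

section
/- Let L be a finite-dimensional Lie algebra. If the class c(L) contains a universal element, then any two CP covers of L are isomorphic as Lie algebras. -/
universe u

/-- `(C, λ)` is a member of the class `c(L)`. -/
def IsCPElem {K : Type u} [Field K] {L C : Type u} [LieRing L] [LieAlgebra K L]
    [LieRing C] [LieAlgebra K C] (lam : C →ₗ⁅K⁆ L) : Prop :=
  Function.Surjective lam ∧
    lam.ker ≤ LieAlgebra.derivedSeries K C 1 ⊓ LieAlgebra.center K C ∧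
    ∀ x ∈ lam.ker, (∃ y z : C, ⁅y, z⁆ = x) → x = 0

/-- `(C, B)` is a CP defining pair for `L`. -/
def IsCPPair (K : Type u) [Field K] (L C : Type u) [LieRing L] [LieAlgebra K L]
    [LieRing C] [LieAlgebra K C] (B : LieIdeal K C) : Prop :=
  Nonempty ((C ⧸ B) ≃ₗ⁅K⁆ L) ∧
    B ≤ LieAlgebra.center K C ⊓ LieAlgebra.derivedSeries K C 1 ∧
    ∀ x ∈ B, (∃ y z : C, ⁅y, z⁆ = x) → x = 0

/-- `C` is a CP cover of `L`: the first component of a CP defining pair of maximal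
dimension. -/
def IsCPCover (K : Type u) [Field K] (L C : Type u) [LieRing L] [LieAlgebra K L]
    [LieRing C] [LieAlgebra K C] : Prop :=
  ∃ B : LieIdeal K C, IsCPPair K L C B ∧
    ∀ (C' : Type u) [LieRing C'] [LieAlgebra K C'] (B' : LieIdeal K C'),
      IsCPPair K L C' B' → Module.finrank K C' ≤ Module.finrank K C

/-!
A central kernel inside `[C, C]` is invisible to brackets: if `C = p + Z(C)` then
`[C, C] = [p, p]`. Hence a map `T → C` whose composite with `λ : C → L` in `c(L)` is onto
has a range containing `[C, C] ⊇ ker λ`, so it is onto; the same decomposition, with `p` a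
complement of `ker τ`, shows that the universal `T` is finite-dimensional. For a CP cover
`C`, universality gives such a surjection `T → C`, and maximality of `dim C` among CP
defining pairs (of which `(T, ker τ)` is one) makes it an isomorphism, so every CP cover
is isomorphic to `T`.
-/

open LieAlgebra

namespace LieAlgebra

variable {R C : Type*} [CommRing R] [LieRing C] [LieAlgebra R C]

variable (R C) in
def lieBracket : C →ₗ[R] C →ₗ[R] C :=
  LinearMap.mk₂ R (fun x y : C => ⁅x, y⁆) add_lie smul_lie lie_add lie_smul

lemma lie_add_add_of_mem_center {z w : C} (hz : z ∈ center R C) (hw : w ∈ center R C)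
    (x y : C) : ⁅x + z, y + w⁆ = ⁅x, y⁆ := by
  have hz' : ∀ a : C, ⁅z, a⁆ = 0 := fun a => by
    rw [← lie_skew, (LieModule.mem_maxTrivSubmodule R C C z).mp hz a, neg_zero]
  simp [(LieModule.mem_maxTrivSubmodule R C C w).mp hw, hz']

lemma derivedSeries_one_le_map₂ {p : Submodule R C}
    (hp : p ⊔ (center R C).toSubmodule = ⊤) :
    (derivedSeries R C 1).toSubmodule ≤ Submodule.map₂ (lieBracket R C) p p := by
  rw [derivedSeries_def, derivedSeriesOfIdeal_succ, derivedSeriesOfIdeal_zero,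
    LieSubmodule.lieIdeal_oper_eq_linear_span', Submodule.span_le]
  rintro - ⟨x, -, y, -, rfl⟩
  obtain ⟨a, ha, z, hz, rfl⟩ := Submodule.mem_sup.mp (hp ▸ Submodule.mem_top : x ∈ p ⊔ _)
  obtain ⟨b, hb, w, hw, rfl⟩ := Submodule.mem_sup.mp (hp ▸ Submodule.mem_top : y ∈ p ⊔ _)
  rw [SetLike.mem_coe, lie_add_add_of_mem_center hz hw]
  exact Submodule.apply_mem_map₂ _ ha hb

theorem surjective_of_surjective_comp {T L : Type*} [LieRing T] [LieAlgebra R T]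
    [LieRing L] [LieAlgebra R L] {lam : C →ₗ⁅R⁆ L} {f : T →ₗ⁅R⁆ C}
    (hker : lam.ker ≤ derivedSeries R C 1 ⊓ center R C) (h : Function.Surjective (lam.comp f)) :
    Function.Surjective f := by
  set p := LinearMap.range (f : T →ₗ[R] C)
  have hs : Function.Surjective ((lam : C →ₗ[R] L) ∘ₗ (f : T →ₗ[R] C)) := h
  have hp : p ⊔ LinearMap.ker (lam : C →ₗ[R] L) = ⊤ := by
    rw [← Submodule.comap_map_eq, ← LinearMap.range_comp, LinearMap.range_eq_top.mpr hs,
      Submodule.comap_top]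
  have hcenter : p ⊔ (center R C).toSubmodule = ⊤ :=
    top_le_iff.mp (hp ▸ sup_le_sup_left (fun x hx => (hker hx).2) p)
  have hbracket : Submodule.map₂ (lieBracket R C) p p ≤ p := by
    rw [Submodule.map₂_le]
    rintro - ⟨a, rfl⟩ - ⟨b, rfl⟩
    exact ⟨⁅a, b⁆, f.map_lie a b⟩
  have hker_le : LinearMap.ker (lam : C →ₗ[R] L) ≤ p := fun x hx =>
    hbracket (derivedSeries_one_le_map₂ hcenter (hker hx).1)
  exact (LinearMap.range_eq_top (f := (f : T →ₗ[R] C))).mp (hp ▸ (sup_eq_left.mpr hker_le).symm)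

end LieAlgebra

theorem LieHom.finite_of_ker_le_derivedSeries_inf_center {K T L : Type*} [Field K]
    [LieRing T] [LieAlgebra K T] [LieRing L] [LieAlgebra K L] [Module.Finite K L]
    (τ : T →ₗ⁅K⁆ L) (hker : τ.ker ≤ derivedSeries K T 1 ⊓ center K T) : Module.Finite K T := by
  obtain ⟨q, hq⟩ := (LinearMap.ker (τ : T →ₗ[K] L)).exists_isCompl
  have hq_fg : q.FG := Submodule.fg_of_fg_map_of_fg_inf_ker (τ : T →ₗ[K] L)
    (IsNoetherian.noetherian _) (by rw [inf_comm, hq.inf_eq_bot]; exact Submodule.fg_bot)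
  have hcenter : q ⊔ (center K T).toSubmodule = ⊤ :=
    top_le_iff.mp (hq.symm.sup_eq_top ▸ sup_le_sup_left (fun x hx => (hker hx).2) q)
  have htop : (⊤ : Submodule K T) ≤ q ⊔ Submodule.map₂ (lieBracket K T) q q :=
    hq.symm.sup_eq_top ▸ sup_le_sup_left
      (fun x hx => derivedSeries_one_le_map₂ hcenter (hker hx).1) q
  exact Module.finite_def.mpr (top_le_iff.mp htop ▸ hq_fg.sup (hq_fg.map₂ _ hq_fg))

section CP

variable {K L C : Type u} [Field K] [LieRing L] [LieAlgebra K L] [LieRing C] [LieAlgebra K C]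

theorem IsCPElem.isCPPair {lam : C →ₗ⁅K⁆ L} (h : IsCPElem lam) : IsCPPair K L C lam.ker := by
  obtain ⟨hsurj, hker, hbracket⟩ := h
  refine ⟨⟨lam.quotKerEquivRange.trans ?_⟩, fun x hx => ⟨(hker hx).2, (hker hx).1⟩, hbracket⟩
  exact (LieEquiv.ofEq _ _ (congrArg SetLike.coe (lam.range_eq_top.mpr hsurj))).trans
    LieSubalgebra.topEquiv

theorem IsCPPair.exists_isCPElem {B : LieIdeal K C} (h : IsCPPair K L C B) :
    ∃ lam : C →ₗ⁅K⁆ L, IsCPElem lam := by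
  obtain ⟨⟨e⟩, hB, hbracket⟩ := h
  let π : C →ₗ⁅K⁆ C ⧸ B := { (B : Submodule K C).mkQ with map_lie' := rfl }
  have hker : (e.toLieHom.comp π).ker = B := by
    ext x
    simp only [LieHom.mem_ker, LieHom.comp_apply, LieEquiv.coe_toLieHom,
      EmbeddingLike.map_eq_zero_iff]
    exact Submodule.Quotient.mk_eq_zero _
  refine ⟨e.toLieHom.comp π, e.surjective.comp (Submodule.mkQ_surjective _), ?_, ?_⟩
  · rw [hker]
    exact fun x hx => ⟨(hB hx).2, (hB hx).1⟩
  · rwa [hker]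

theorem IsCPCover.nonempty_lieEquiv_of_universal [Module.Finite K L]
    {T : Type u} [LieRing T] [LieAlgebra K T] {τ : T →ₗ⁅K⁆ L} (hT : IsCPElem τ)
    (huniv : ∀ (C : Type u) [LieRing C] [LieAlgebra K C] (lam : C →ₗ⁅K⁆ L),
      IsCPElem lam → ∃ h : T →ₗ⁅K⁆ C, lam.comp h = τ)
    (hC : IsCPCover K L C) : Nonempty (T ≃ₗ⁅K⁆ C) := by
  obtain ⟨B, hB, hmax⟩ := hC
  obtain ⟨lam, hlam⟩ := hB.exists_isCPElem
  obtain ⟨f, hf⟩ := huniv C lam hlam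
  have hsurj : Function.Surjective f := surjective_of_surjective_comp hlam.2.1 (hf ▸ hT.1)
  have : Module.Finite K T := τ.finite_of_ker_le_derivedSeries_inf_center hT.2.1
  have : Module.Finite K C := Module.Finite.of_surjective (f : T →ₗ[K] C) hsurj
  have hdim : Module.finrank K T = Module.finrank K C :=
    (hmax T τ.ker hT.isCPPair).antisymm
      (LinearMap.finrank_le_finrank_of_surjective (f := (f : T →ₗ[K] C)) hsurj)
  have hinj : Function.Injective f :=
    (LinearMap.injective_iff_surjective_of_finrank_eq_finrank hdim).mpr hsurj
  exact ⟨LieEquiv.ofBijective f ⟨hinj, hsurj⟩⟩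

end CP

/-- for a finite-dimensional Lie algebra `L`, if `c(L)` contains a universal
element `(T, τ)`, then any two CP covers of `L` are isomorphic. -/
theorem cp_covers_isomorphic
    (K : Type u) [Field K] (L : Type u) [LieRing L] [LieAlgebra K L] [Module.Finite K L]
    (T : Type u) [LieRing T] [LieAlgebra K T] (τ : T →ₗ⁅K⁆ L)
    (hT : IsCPElem τ)
    (huniv : ∀ (C : Type u) [LieRing C] [LieAlgebra K C] (lam : C →ₗ⁅K⁆ L),
      IsCPElem lam → ∃ h : T →ₗ⁅K⁆ C, lam.comp h = τ)
    (C₁ C₂ : Type u) [LieRing C₁] [LieAlgebra K C₁] [LieRing C₂] [LieAlgebra K C₂]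
    (h₁ : IsCPCover K L C₁) (h₂ : IsCPCover K L C₂) :
    Nonempty (C₁ ≃ₗ⁅K⁆ C₂) := by
  obtain ⟨e₁⟩ := h₁.nonempty_lieEquiv_of_universal hT huniv
  obtain ⟨e₂⟩ := h₂.nonempty_lieEquiv_of_universal hT huniv
  exact ⟨e₁.symm.trans e₂⟩
end

section
/- Let L be the p-Lie ring (p ≥ 5) of order p⁶ and class 3 generated by v, v₁,...,v₅ with relations [v₁,v₂] = v₃ - v₄/2 - v₅/2, [v₃,v₁] = v₄, [v₃,v₂] = v₅, [v,v₁] = v₄, and pvᵢ = 0 for all i (all other brackets of generators zero). Then the Bogomolov multiplier B̃₀(L) is trivial. -/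
/-!
Let `S` be the ideal generated by the commutators lying in `R`. Every bracket `⁅x, r⁆` with
`r ∈ R` lies in `S`, so `R` is the `ℤ`-span of the relators plus `S`. Modulo `S` the relators span
the same module `A` as `p v₀, p v₁, p v₂` and `v₃, v₄, v₅` minus the brackets defining them:
`⁅v₀, v₁⁆ - v₄` differs from `⁅v₃, v₁⁆ - v₄` by the commutator `⁅v₃ - v₀, v₁⁆ ∈ R`, and
`p v₃, p v₄, p v₅` differ from `p` times the new generators by brackets with `p v₁, p v₃ ∈ R`.
The abelianisations of the six generators of `A` are `p e₀, p e₁, p e₂, e₃, e₄, e₅`, which are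
linearly independent, so `A ∩ [F, F] = 0` and therefore `R ∩ [F, F] ⊆ S`.
-/

open LieAlgebra LieSubmodule Set

namespace LieIdeal

variable {R L : Type*} [CommRing R] [LieRing L] [LieAlgebra R L]

/-- The ideal `⟨K(F) ∩ I⟩` of the Hopf-type formula for `B̃₀`. -/
def commutatorSpan (I : LieIdeal R L) : LieIdeal R L :=
  lieSpan R L {z | (∃ x y : L, ⁅x, y⁆ = z) ∧ z ∈ I}

variable {I : LieIdeal R L}

lemma lie_mem_commutatorSpan {x y : L} (h : ⁅x, y⁆ ∈ I) : ⁅x, y⁆ ∈ I.commutatorSpan :=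
  subset_lieSpan ⟨⟨x, y, rfl⟩, h⟩

lemma lie_mem_commutatorSpan_of_mem_left {x : L} (hx : x ∈ I) (y : L) :
    ⁅x, y⁆ ∈ I.commutatorSpan :=
  lie_mem_commutatorSpan (by rw [← lie_skew]; exact neg_mem (I.lie_mem hx))

lemma lie_mem_derivedSeries_one (x y : L) : ⁅x, y⁆ ∈ derivedSeries R L 1 :=
  lie_mem_lie (mem_top x) (mem_top y)

lemma commutatorSpan_le_derivedSeries_one : I.commutatorSpan ≤ derivedSeries R L 1 := by
  rw [commutatorSpan, lieSpan_le]
  rintro _ ⟨⟨x, y, rfl⟩, -⟩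
  exact lie_mem_derivedSeries_one x y

lemma lieSpan_le_sup_commutatorSpan {G : Set L} {A : Submodule R L}
    (hG : G ⊆ (A ⊔ (commutatorSpan (lieSpan R L G)).toSubmodule : Submodule R L)) :
    (lieSpan R L G).toSubmodule ≤ A ⊔ (commutatorSpan (lieSpan R L G)).toSubmodule := by
  intro z hz
  induction hz using lieSpan_induction with
  | mem x hx => exact hG hx
  | zero => exact zero_mem _
  | add x y _ _ hx hy => exact add_mem hx hy
  | smul a x _ hx => exact Submodule.smul_mem _ a hx
  | lie x y hy _ => exact Submodule.mem_sup_right (lie_mem_commutatorSpan (lie_mem _ hy))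

lemma inf_derivedSeries_one_le_commutatorSpan {A : Submodule R L}
    (hI : I.toSubmodule ≤ A ⊔ I.commutatorSpan.toSubmodule)
    (hA : Disjoint A (derivedSeries R L 1).toSubmodule) :
    I ⊓ derivedSeries R L 1 ≤ I.commutatorSpan := by
  rintro x ⟨hxI, hxD⟩
  obtain ⟨a, ha, s, hs, rfl⟩ := Submodule.mem_sup.mp (hI hxI)
  have haD : a ∈ derivedSeries R L 1 := by
    simpa using sub_mem hxD (commutatorSpan_le_derivedSeries_one hs)
  rwa [Submodule.disjoint_def.mp hA a ha haD, zero_add]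

end LieIdeal

lemma LieHom.derivedSeries_one_le_ker {R L L' : Type*} [CommRing R] [LieRing L] [LieAlgebra R L]
    [LieRing L'] [LieAlgebra R L'] [IsLieAbelian L'] (f : L →ₗ⁅R⁆ L') :
    derivedSeries R L 1 ≤ f.ker := by
  rw [derivedSeries_def, derivedSeriesOfIdeal_succ, derivedSeriesOfIdeal_zero,
    lieIdeal_oper_eq_span, lieSpan_le]
  rintro _ ⟨x, y, rfl⟩
  simp [trivial_lie_zero]

namespace FreeLieAlgebra

section

attribute [local instance] LieRing.ofAssociativeRing

variable (R X : Type*) [CommRing R] [DecidableEq X]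

/-- The abelianisation map, built as a Lie algebra map into `X → R` with its commutator bracket,
which vanishes. -/
noncomputable def abelianize : FreeLieAlgebra R X →ₗ[R] X → R :=
  (lift R fun i ↦ Pi.single i 1 : FreeLieAlgebra R X →ₗ⁅R⁆ X → R)

variable {R X}

lemma abelianize_of (i : X) : abelianize R X (of R i) = Pi.single i 1 :=
  lift_of_apply (R := R) _ i

lemma abelianize_lie (x y : FreeLieAlgebra R X) : abelianize R X ⁅x, y⁆ = 0 := by
  simp [abelianize, Ring.lie_def, mul_comm]

lemma derivedSeries_one_le_ker_abelianize :
    (derivedSeries R (FreeLieAlgebra R X) 1).toSubmodule ≤ LinearMap.ker (abelianize R X) := by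
  have : IsLieAbelian (X → R) := isMulCommutative_iff_isLieAbelian.mp inferInstance
  rw [abelianize, ← LieHom.ker_toSubmodule, toSubmodule_le_toSubmodule]
  exact LieHom.derivedSeries_one_le_ker _

end

end FreeLieAlgebra

namespace BogomolovExampleTwo

open FreeLieAlgebra

local notation "F" => FreeLieAlgebra ℤ (Fin 6)

local notation "v" => FreeLieAlgebra.of ℤ (X := Fin 6)

noncomputable def relators (p q : ℕ) : Set F :=
  {⁅v 1, v 2⁆ - v 3 + q • v 4 + q • v 5,
   ⁅v 3, v 1⁆ - v 4,
   ⁅v 3, v 2⁆ - v 5,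
   ⁅v 0, v 1⁆ - v 4,
   p • v 0, p • v 1, p • v 2, p • v 3, p • v 4, p • v 5,
   ⁅v 0, v 2⁆, ⁅v 0, v 3⁆, ⁅v 0, v 4⁆, ⁅v 0, v 5⁆,
   ⁅v 1, v 4⁆, ⁅v 1, v 5⁆, ⁅v 2, v 4⁆, ⁅v 2, v 5⁆,
   ⁅v 3, v 4⁆, ⁅v 3, v 5⁆, ⁅v 4, v 5⁆}

/-- Modulo commutators lying in the relator ideal these span the same module as the relators,
and their abelianisations are linearly independent. -/
noncomputable def reducedRelators (p q : ℕ) : Fin 6 → F :=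
  ![p • v 0, p • v 1, p • v 2,
    v 3 - ⁅v 1, v 2⁆ - q • ⁅v 3, v 1⁆ - q • ⁅v 3, v 2⁆,
    v 4 - ⁅v 3, v 1⁆,
    v 5 - ⁅v 3, v 2⁆]

lemma abelianize_comp_reducedRelators (p q : ℕ) :
    abelianize ℤ (Fin 6) ∘ reducedRelators p q =
      fun i ↦ Pi.single i (![(p : ℤ), p, p, 1, 1, 1] i) := by
  funext i
  fin_cases i <;> simp [reducedRelators, abelianize_of, abelianize_lie, ← Pi.single_smul]

lemma disjoint_span_reducedRelators_derivedSeries {p : ℕ} (hp : p ≠ 0) (q : ℕ) :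
    Disjoint (Submodule.span ℤ (range (reducedRelators p q)))
      (derivedSeries ℤ F 1).toSubmodule := by
  have hli : LinearIndependent ℤ (abelianize ℤ (Fin 6) ∘ reducedRelators p q) := by
    rw [abelianize_comp_reducedRelators]
    refine Pi.linearIndependent_single_of_ne_zero fun i ↦ ?_
    fin_cases i <;> simp [hp]
  exact (Submodule.range_ker_disjoint hli).mono_right derivedSeries_one_le_ker_abelianize

lemma lie_sub_mem_commutatorSpan_relators (p q : ℕ) :
    ⁅v 3 - v 0, v 1⁆ ∈ LieIdeal.commutatorSpan (lieSpan ℤ F (relators p q)) := by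
  refine LieIdeal.lie_mem_commutatorSpan ?_
  have h := (lieSpan ℤ F (relators p q)).sub_mem
    (subset_lieSpan (by simp only [relators, mem_insert_iff, true_or, or_true] :
      ⁅v 3, v 1⁆ - v 4 ∈ relators p q))
    (subset_lieSpan (by simp only [relators, mem_insert_iff, true_or, or_true] :
      ⁅v 0, v 1⁆ - v 4 ∈ relators p q))
  rwa [sub_sub_sub_cancel_right, ← sub_lie] at h

lemma relators_subset_span_reducedRelators_sup (p q : ℕ) :
    relators p q ⊆ (Submodule.span ℤ (range (reducedRelators p q)) ⊔
      (LieIdeal.commutatorSpan (lieSpan ℤ F (relators p q))).toSubmodule : Submodule ℤ F) := by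
  set I := lieSpan ℤ F (relators p q)
  set S := LieIdeal.commutatorSpan I
  set T : Submodule ℤ F := Submodule.span ℤ (range (reducedRelators p q)) ⊔ S.toSubmodule
  have hr (i : Fin 6) : reducedRelators p q i ∈ T :=
    Submodule.mem_sup_left (Submodule.subset_span ⟨i, rfl⟩)
  have hS {z : F} (hz : z ∈ S) : z ∈ T := Submodule.mem_sup_right hz
  have hpv1 : p • v 1 ∈ I :=
    subset_lieSpan (by simp only [relators, mem_insert_iff, true_or, or_true])
  have hpv3 : p • v 3 ∈ I :=
    subset_lieSpan (by simp only [relators, mem_insert_iff, true_or, or_true])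
  simp only [relators, insert_subset_iff, singleton_subset_iff]
  refine ⟨?_, ?_, ?_, ?_, hr 0, hr 1, hr 2, ?_, ?_, ?_,
    ?_, ?_, ?_, ?_, ?_, ?_, ?_, ?_, ?_, ?_, ?_⟩
  · refine mem_of_eq_of_mem ?_ <|
      T.sub_mem (T.add_mem (T.smul_mem q (hr 4)) (T.smul_mem q (hr 5))) (hr 3)
    simp only [reducedRelators, Matrix.cons_val]
    module
  · refine mem_of_eq_of_mem ?_ <| T.neg_mem (hr 4)
    simp only [reducedRelators, Matrix.cons_val]
    module
  · refine mem_of_eq_of_mem ?_ <| T.neg_mem (hr 5)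
    simp only [reducedRelators, Matrix.cons_val]
    module
  · refine mem_of_eq_of_mem ?_ <|
      T.sub_mem (T.neg_mem (hr 4)) (hS (lie_sub_mem_commutatorSpan_relators p q))
    simp only [reducedRelators, Matrix.cons_val, sub_lie]
    module
  · refine mem_of_eq_of_mem ?_ <| T.add_mem (T.smul_mem p (hr 3)) (hS (S.add_mem (S.add_mem
      (LieIdeal.lie_mem_commutatorSpan_of_mem_left hpv1 (v 2))
      (S.smul_mem q (LieIdeal.lie_mem_commutatorSpan_of_mem_left hpv3 (v 1))))
      (S.smul_mem q (LieIdeal.lie_mem_commutatorSpan_of_mem_left hpv3 (v 2)))))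
    simp only [reducedRelators, Matrix.cons_val, nsmul_lie]
    module
  · refine mem_of_eq_of_mem ?_ <| T.add_mem (T.smul_mem p (hr 4))
      (hS (LieIdeal.lie_mem_commutatorSpan_of_mem_left hpv3 (v 1)))
    simp only [reducedRelators, Matrix.cons_val, nsmul_lie]
    module
  · refine mem_of_eq_of_mem ?_ <| T.add_mem (T.smul_mem p (hr 5))
      (hS (LieIdeal.lie_mem_commutatorSpan_of_mem_left hpv3 (v 2)))
    simp only [reducedRelators, Matrix.cons_val, nsmul_lie]
    module
  all_goals
    refine hS (LieIdeal.lie_mem_commutatorSpan (subset_lieSpan ?_))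
    simp only [relators, mem_insert_iff, mem_singleton_iff, true_or, or_true]

end BogomolovExampleTwo

theorem bogomolov_trivial_example_two_general (p : ℕ) (hp : p.Prime)
    (v : Fin 6 → FreeLieAlgebra ℤ (Fin 6)) (hv : v = FreeLieAlgebra.of ℤ)
    (R : LieIdeal ℤ (FreeLieAlgebra ℤ (Fin 6)))
    (hR : R = LieSubmodule.lieSpan ℤ (FreeLieAlgebra ℤ (Fin 6))
      {⁅v 1, v 2⁆ - v 3 + ((p + 1) / 2) • v 4 + ((p + 1) / 2) • v 5,
       ⁅v 3, v 1⁆ - v 4,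
       ⁅v 3, v 2⁆ - v 5,
       ⁅v 0, v 1⁆ - v 4,
       p • v 0, p • v 1, p • v 2, p • v 3, p • v 4, p • v 5,
       ⁅v 0, v 2⁆, ⁅v 0, v 3⁆, ⁅v 0, v 4⁆, ⁅v 0, v 5⁆,
       ⁅v 1, v 4⁆, ⁅v 1, v 5⁆, ⁅v 2, v 4⁆, ⁅v 2, v 5⁆,
       ⁅v 3, v 4⁆, ⁅v 3, v 5⁆, ⁅v 4, v 5⁆}) :
    R ⊓ LieAlgebra.derivedSeries ℤ (FreeLieAlgebra ℤ (Fin 6)) 1 ≤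
      LieSubmodule.lieSpan ℤ (FreeLieAlgebra ℤ (Fin 6))
        {z | (∃ x y : FreeLieAlgebra ℤ (Fin 6), ⁅x, y⁆ = z) ∧ z ∈ R} := by
  subst hv hR
  exact LieIdeal.inf_derivedSeries_one_le_commutatorSpan
    (LieIdeal.lieSpan_le_sup_commutatorSpan
      (BogomolovExampleTwo.relators_subset_span_reducedRelators_sup p _))
    (BogomolovExampleTwo.disjoint_span_reducedRelators_derivedSeries hp.ne_zero _)

/-- the `p`-Lie ring (`p ≥ 5`) of order `p⁶` and class `3` presented by
generators `v, v₁, …, v₅` and relations `[v₁,v₂] = v₃ - v₄/2 - v₅/2`, `[v₃,v₁] = v₄`,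
`[v₃,v₂] = v₅`, `[v,v₁] = v₄`, `pvᵢ = 0`, all other brackets of generators trivial
(`1/2` is realised as `(p+1)/2` modulo the `p`-torsion), has trivial Bogomolov multiplier:
by the Hopf-type formula, `R ∩ F² ⊆ ⟨K(F) ∩ R⟩`. -/
theorem bogomolov_trivial_example_two (p : ℕ) (hp : p.Prime) (hp5 : 5 ≤ p)
    (v : Fin 6 → FreeLieAlgebra ℤ (Fin 6)) (hv : v = FreeLieAlgebra.of ℤ)
    (R : LieIdeal ℤ (FreeLieAlgebra ℤ (Fin 6)))
    (hR : R = LieSubmodule.lieSpan ℤ (FreeLieAlgebra ℤ (Fin 6))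
      {⁅v 1, v 2⁆ - v 3 + ((p + 1) / 2) • v 4 + ((p + 1) / 2) • v 5,
       ⁅v 3, v 1⁆ - v 4,
       ⁅v 3, v 2⁆ - v 5,
       ⁅v 0, v 1⁆ - v 4,
       p • v 0, p • v 1, p • v 2, p • v 3, p • v 4, p • v 5,
       ⁅v 0, v 2⁆, ⁅v 0, v 3⁆, ⁅v 0, v 4⁆, ⁅v 0, v 5⁆,
       ⁅v 1, v 4⁆, ⁅v 1, v 5⁆, ⁅v 2, v 4⁆, ⁅v 2, v 5⁆,
       ⁅v 3, v 4⁆, ⁅v 3, v 5⁆, ⁅v 4, v 5⁆}) :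
    R ⊓ LieAlgebra.derivedSeries ℤ (FreeLieAlgebra ℤ (Fin 6)) 1 ≤
      LieSubmodule.lieSpan ℤ (FreeLieAlgebra ℤ (Fin 6))
        {z | (∃ x y : FreeLieAlgebra ℤ (Fin 6), ⁅x, y⁆ = z) ∧ z ∈ R} :=
  bogomolov_trivial_example_two_general p hp v hv R hR
end
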